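/- arXiv:2008.02119 — 2 statements merged into one kernel-verified Lean document; each statement's English description precedes it below -/
import Mathlib

section
/- Let Ω be a bounded open subset of ℝ^N and u ∈ L^{2*_s}(ℝ^N) with u = 0 a.e. on ℝ^N∖Ω. For any δ with 0 < δ < ∫_Ω |u|^{2*_s} dx, there exist r > 0 and z_max ∈ ℝ^N such that the Lévy concentration function satisfies Q_u(r) = ∫_{B(z_max,r)} |u|^{2*_s} dx = δ (the supremum defining Q_u(r) is attained at z_max), and dist(z_max, Ω) ≤ r. -/
open MeasureTheory Real

noncomputable section

abbrev Euc (N : ℕ) := EuclideanSpace ℝ (Fin N)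

/-- The critical exponent `2*_s = 2N/(N-2s)`. -/
def twoStar (N : ℕ) (s : ℝ) : ℝ := 2 * N / (N - 2 * s)

/-- Square of the Gagliardo seminorm `‖u‖²`. -/
def gagSq (N : ℕ) (s : ℝ) (u : Euc N → ℝ) : ℝ :=
  ∫ p : Euc N × Euc N, (u p.1 - u p.2) ^ 2 / dist p.1 p.2 ^ ((N : ℝ) + 2 * s)

/-- The Gagliardo seminorm `‖u‖`. -/
def gagNorm (N : ℕ) (s : ℝ) (u : Euc N → ℝ) : ℝ := Real.sqrt (gagSq N s u)

/-- Finiteness of the Gagliardo seminorm (`‖u‖ < ∞`). -/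
def GagFinite (N : ℕ) (s : ℝ) (u : Euc N → ℝ) : Prop :=
  Integrable (fun p : Euc N × Euc N => (u p.1 - u p.2) ^ 2 / dist p.1 p.2 ^ ((N : ℝ) + 2 * s))

/-- Membership in `Ḣ^s(Ω)`: measurable, in `L^{2*_s}(ℝ^N)`, finite Gagliardo seminorm,
and vanishing a.e. outside `Ω`. -/
structure MemHs (N : ℕ) (s : ℝ) (Ω : Set (Euc N)) (u : Euc N → ℝ) : Prop where
  meas : Measurable u
  lp : Integrable fun x : Euc N => |u x| ^ twoStar N s
  fin : GagFinite N s u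
  vanish : ∀ᵐ x : Euc N, x ∉ Ω → u x = 0

/-- The energy functional `E(u;Ω)`. -/
def energy (N : ℕ) (s : ℝ) (Ω : Set (Euc N)) (u : Euc N → ℝ) : ℝ :=
  (1 / 2) * gagSq N s u - (1 / twoStar N s) * ∫ x in Ω, |u x| ^ twoStar N s

/-- The Nehari functional `N(u;Ω)`. -/
def nehariFun (N : ℕ) (s : ℝ) (Ω : Set (Euc N)) (u : Euc N → ℝ) : ℝ :=
  gagSq N s u - ∫ x in Ω, |u x| ^ twoStar N s

/-- The pairing `⟨E'(u), v⟩` (with domain `Ω`). -/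
def pairing (N : ℕ) (s : ℝ) (Ω : Set (Euc N)) (u v : Euc N → ℝ) : ℝ :=
  (∫ p : Euc N × Euc N, (u p.1 - u p.2) * (v p.1 - v p.2) / dist p.1 p.2 ^ ((N : ℝ) + 2 * s))
    - ∫ x in Ω, |u x| ^ (twoStar N s - 2) * u x * v x

/-- The sharp fractional Sobolev constant `S(N,s)`. -/
def sobolevS (N : ℕ) (s : ℝ) : ℝ :=
  (2 : ℝ) ^ (-(2 * s)) * Real.pi ^ (-s) *
    (Real.Gamma ((N - 2 * s) / 2) / Real.Gamma ((N + 2 * s) / 2)) *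
    (Real.Gamma N / Real.Gamma (N / 2)) ^ (2 * s / N)

/-- The Lévy concentration function `Q_u(r)`. -/
def levyQ (N : ℕ) (s : ℝ) (u : Euc N → ℝ) (r : ℝ) : ℝ :=
  ⨆ z : Euc N, ∫ x in Metric.ball z r, |u x| ^ twoStar N s

/-!
Write `f = |u|^{2*_s}`. Since spheres are null for Lebesgue measure, dominated convergence makes
`(z, r) ↦ ∫_{B(z,r)} f` jointly continuous. As `f` vanishes off the bounded set `Ω`, only centres in
the compact set `{dist(·, Ω) ≤ R}` matter when `r ≤ R`, so `Q` is a supremum of a continuous family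
over a compact set: it is continuous and the supremum is attained. Since `Q(0) = 0` and
`Q(R) ≥ ∫_Ω f` once `Ω ⊆ B(0, R)`, the intermediate value theorem gives `r` with `Q(r) = δ`.
-/

open Metric Set

theorem Metric.mem_cthickening_iff_infDist_le {X : Type*} [PseudoMetricSpace X] {s : Set X}
    {x : X} {δ : ℝ} (hs : s.Nonempty) (hδ : 0 ≤ δ) :
    x ∈ cthickening δ s ↔ infDist x s ≤ δ := by
  rw [mem_cthickening_iff, ENNReal.le_ofReal_iff_toReal_le (infEDist_ne_top hs) hδ]
  rfl

theorem Bornology.IsBounded.isCompact_cthickening {X : Type*} [PseudoMetricSpace X]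
    [ProperSpace X] {s : Set X} (hs : IsBounded s) (δ : ℝ) : IsCompact (Metric.cthickening δ s) :=
  isCompact_of_isClosed_isBounded isClosed_cthickening (hs.cthickening (δ := δ))

theorem ciSup_eq_csSup_image_of_eq_zero {α : Type*} {g : α → ℝ} {K : Set α} (hK : K.Nonempty)
    (hbdd : BddAbove (range g)) (hg : 0 ≤ g) (hzero : ∀ z ∉ K, g z = 0) :
    ⨆ z, g z = sSup (g '' K) := by
  have hbddK : BddAbove (g '' K) := hbdd.mono (image_subset_range g K)
  have ⟨k, hk⟩ := hK
  have : Nonempty α := ⟨k⟩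
  refine le_antisymm (ciSup_le fun z => ?_) (csSup_le (hK.image g) ?_)
  · by_cases hz : z ∈ K
    · exact le_csSup hbddK (mem_image_of_mem g hz)
    · rw [hzero z hz]
      exact (hg k).trans (le_csSup hbddK (mem_image_of_mem g hk))
  · rintro _ ⟨z, -, rfl⟩
    exact le_ciSup hbdd z

theorem setIntegral_ball_eq_zero_of_le_infDist {X F : Type*} [PseudoMetricSpace X]
    [MeasurableSpace X] [OpensMeasurableSpace X] [NormedAddCommGroup F] [NormedSpace ℝ F]
    {μ : Measure X} {f : X → F} {Ω : Set X} (hvan : ∀ᵐ x ∂μ, x ∉ Ω → f x = 0) {z : X} {r : ℝ}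
    (hr : r ≤ infDist z Ω) : ∫ x in ball z r, f x ∂μ = 0 := by
  refine setIntegral_eq_zero_of_ae_eq_zero (hvan.mono fun x hx hxr => hx fun hxΩ => ?_)
  rw [mem_ball, dist_comm] at hxr
  linarith [infDist_le_dist_of_mem (x := z) hxΩ]

section MetricSpace

variable {X : Type*} [PseudoMetricSpace X] [MeasurableSpace X] {μ : Measure X} {f : X → ℝ}
  {Ω : Set X}

def levyConcentration (μ : Measure X) (f : X → ℝ) (r : ℝ) : ℝ :=
  ⨆ z, ∫ x in ball z r, f x ∂μ

theorem bddAbove_range_setIntegral_ball (hf : Integrable f μ) (hf0 : 0 ≤ f) (r : ℝ) :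
    BddAbove (range fun z => ∫ x in ball z r, f x ∂μ) :=
  ⟨∫ x, f x ∂μ, by
    rintro _ ⟨z, rfl⟩
    exact setIntegral_le_integral hf (.of_forall hf0)⟩

theorem levyConcentration_zero : levyConcentration μ f 0 = 0 := by
  simp [levyConcentration]

theorem levyConcentration_eq_sSup_image [OpensMeasurableSpace X] (hf : Integrable f μ)
    (hf0 : 0 ≤ f) (hvan : ∀ᵐ x ∂μ, x ∉ Ω → f x = 0) (hne : Ω.Nonempty) {r R : ℝ} (hR : 0 ≤ R)
    (hr : r ≤ R) :
    levyConcentration μ f r =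
      sSup ((fun z => ∫ x in ball z r, f x ∂μ) '' cthickening R Ω) := by
  refine ciSup_eq_csSup_image_of_eq_zero (hne.mono (self_subset_cthickening Ω))
    (bddAbove_range_setIntegral_ball hf hf0 r)
    (fun z => setIntegral_nonneg measurableSet_ball fun x _ => hf0 x) fun z hz => ?_
  rw [mem_cthickening_iff_infDist_le hne hR, not_le] at hz
  exact setIntegral_ball_eq_zero_of_le_infDist hvan (hr.trans hz.le)

end MetricSpace

section NormedSpace

variable {E : Type*} [NormedAddCommGroup E] [NormedSpace ℝ E] [FiniteDimensional ℝ E]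
  [MeasurableSpace E] [BorelSpace E] {μ : Measure E}

theorem continuous_setIntegral_ball [Nontrivial E] [μ.IsAddHaarMeasure] {F : Type*}
    [NormedAddCommGroup F] [NormedSpace ℝ F] {f : E → F} (hf : Integrable f μ) :
    Continuous fun p : E × ℝ => ∫ x in ball p.1 p.2, f x ∂μ := by
  simp_rw [← integral_indicator measurableSet_ball]
  refine continuous_iff_continuousAt.2 fun p => continuousAt_of_dominated
    (.of_forall fun q => hf.aestronglyMeasurable.indicator measurableSet_ball)
    (.of_forall fun q => ae_of_all _ fun x => norm_indicator_le_norm_self _ _) hf.norm ?_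
  filter_upwards [compl_mem_ae_iff.2 (Measure.addHaar_sphere μ p.1 p.2)] with x hx
  rcases lt_or_gt_of_ne (mt mem_sphere.2 hx) with h | h
  · refine (continuousAt_const (y := f x)).congr (Filter.mem_of_superset ((isOpen_lt
      (continuous_const.dist continuous_fst) continuous_snd).mem_nhds h) fun q hq => ?_)
    exact (indicator_of_mem (mem_ball.2 hq) f).symm
  · refine (continuousAt_const (y := 0)).congr (Filter.mem_of_superset ((isOpen_lt continuous_snd
      (continuous_const.dist continuous_fst)).mem_nhds h) fun q hq => ?_)
    exact (indicator_of_notMem (fun hq' => (mem_ball.1 hq').not_gt hq) f).symm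

variable {f : E → ℝ} {Ω : Set E}

theorem continuous_levyConcentration [Nontrivial E] [μ.IsAddHaarMeasure] (hf : Integrable f μ)
    (hf0 : 0 ≤ f) (hvan : ∀ᵐ x ∂μ, x ∉ Ω → f x = 0) (hΩ : Bornology.IsBounded Ω)
    (hne : Ω.Nonempty) : Continuous (levyConcentration μ f) := by
  refine continuous_iff_continuousAt.2 fun r₀ => ?_
  obtain ⟨R, hr₀R, hR⟩ : ∃ R, r₀ < R ∧ 0 ≤ R := ⟨max r₀ 0 + 1, by grind, by positivity⟩
  have hsSup : Continuous fun r => sSup ((fun z => ∫ x in ball z r, f x ∂μ) '' cthickening R Ω) :=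
    (hΩ.isCompact_cthickening R).continuous_sSup
      ((continuous_setIntegral_ball hf).comp continuous_swap)
  refine hsSup.continuousAt.congr (Filter.mem_of_superset (Iio_mem_nhds hr₀R) fun r hr => ?_)
  exact (levyConcentration_eq_sSup_image hf hf0 hvan hne hR (le_of_lt hr)).symm

theorem exists_setIntegral_ball_eq_levyConcentration [Nontrivial E] [μ.IsAddHaarMeasure]
    (hf : Integrable f μ) (hf0 : 0 ≤ f) (hvan : ∀ᵐ x ∂μ, x ∉ Ω → f x = 0)
    (hΩ : Bornology.IsBounded Ω) (hne : Ω.Nonempty) {r : ℝ} (hr : 0 ≤ r) :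
    ∃ z, infDist z Ω ≤ r ∧ ∫ x in ball z r, f x ∂μ = levyConcentration μ f r := by
  obtain ⟨z, hz, hmax⟩ := (hΩ.isCompact_cthickening r).exists_sSup_image_eq
    (f := fun z => ∫ x in ball z r, f x ∂μ) (hne.mono (self_subset_cthickening Ω))
    ((continuous_setIntegral_ball hf).comp (.prodMk_left r)).continuousOn
  refine ⟨z, (mem_cthickening_iff_infDist_le hne hr).1 hz, ?_⟩
  rw [levyConcentration_eq_sSup_image hf hf0 hvan hne hr le_rfl, hmax]

theorem exists_levyConcentration_eq [Nontrivial E] [μ.IsAddHaarMeasure] (hf : Integrable f μ)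
    (hf0 : 0 ≤ f) (hvan : ∀ᵐ x ∂μ, x ∉ Ω → f x = 0) (hΩ : Bornology.IsBounded Ω) {δ : ℝ}
    (hδ0 : 0 < δ) (hδ : δ < ∫ x in Ω, f x ∂μ) :
    ∃ r > 0, ∃ z, ∫ x in ball z r, f x ∂μ = δ ∧ levyConcentration μ f r = δ ∧
      infDist z Ω ≤ r := by
  have hne : Ω.Nonempty := by
    by_contra h
    simp [not_nonempty_iff_eq_empty.1 h] at hδ
    linarith
  obtain ⟨R₀, hR₀⟩ := hΩ.subset_ball 0
  obtain ⟨R, hR₀R, hR⟩ : ∃ R, R₀ ≤ R ∧ 0 ≤ R := ⟨max R₀ 0, le_max_left _ _, le_max_right _ _⟩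
  have hδR : δ ≤ levyConcentration μ f R := calc
    δ ≤ ∫ x in Ω, f x ∂μ := hδ.le
    _ ≤ ∫ x in ball 0 R, f x ∂μ := setIntegral_mono_set hf.integrableOn (.of_forall hf0)
      (hR₀.trans (ball_subset_ball hR₀R)).eventuallyLE
    _ ≤ levyConcentration μ f R := le_ciSup (bddAbove_range_setIntegral_ball hf hf0 R) 0
  obtain ⟨r, hrR, hQr⟩ := intermediate_value_Icc hR
    (continuous_levyConcentration hf hf0 hvan hΩ hne).continuousOn
    ⟨levyConcentration_zero.trans_le hδ0.le, hδR⟩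
  have hr0 : 0 < r := hrR.1.lt_of_ne <| by
    rintro rfl
    linarith [levyConcentration_zero (μ := μ) (f := f)]
  obtain ⟨z, hzΩ, hz⟩ := exists_setIntegral_ball_eq_levyConcentration hf hf0 hvan hΩ hne hr0.le
  exact ⟨r, hr0, z, hz.trans hQr, hQr, hzΩ⟩

end NormedSpace

theorem statement10_general (N : ℕ) (s : ℝ) (hN : 2 ≤ N)
    (hsN : 2 * s < N)
    (Ω : Set (Euc N)) (hΩb : Bornology.IsBounded Ω)
    (u : Euc N → ℝ)
    (hLp : Integrable fun x : Euc N => |u x| ^ twoStar N s)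
    (hvan : ∀ᵐ x : Euc N, x ∉ Ω → u x = 0)
    (δ : ℝ) (hδ0 : 0 < δ) (hδ : δ < ∫ x in Ω, |u x| ^ twoStar N s) :
    ∃ r > (0 : ℝ), ∃ zmax : Euc N,
      (∫ x in Metric.ball zmax r, |u x| ^ twoStar N s) = δ ∧
      levyQ N s u r = δ ∧
      Metric.infDist zmax Ω ≤ r := by
  have : Nonempty (Fin N) := ⟨⟨0, by omega⟩⟩
  have hN' : (2 : ℝ) ≤ N := by exact_mod_cast hN
  have hp : 0 < twoStar N s := div_pos (by linarith) (by linarith)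
  -- `levyQ N s u` unfolds to `levyConcentration volume (fun x => |u x| ^ twoStar N s)`.
  exact exists_levyConcentration_eq hLp (fun x => by positivity)
    (hvan.mono fun x hx hxΩ => by simp [hx hxΩ, zero_rpow hp.ne']) hΩb hδ0 hδ

/-- for bounded `Ω` and `0 < δ < ∫_Ω |u|^{2*_s}`, the Lévy concentration
function attains the value `δ` at some radius `r > 0` and center `z_max` with
`dist(z_max, Ω) ≤ r`. -/
theorem statement10 (N : ℕ) (s : ℝ) (hN : 2 ≤ N) (hs0 : 0 < s) (hs1 : s < 1)
    (hsN : 2 * s < N)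
    (Ω : Set (Euc N)) (hΩo : IsOpen Ω) (hΩb : Bornology.IsBounded Ω)
    (u : Euc N → ℝ) (hmeas : Measurable u)
    (hLp : Integrable fun x : Euc N => |u x| ^ twoStar N s)
    (hvan : ∀ᵐ x : Euc N, x ∉ Ω → u x = 0)
    (δ : ℝ) (hδ0 : 0 < δ) (hδ : δ < ∫ x in Ω, |u x| ^ twoStar N s) :
    ∃ r > (0 : ℝ), ∃ zmax : Euc N,
      (∫ x in Metric.ball zmax r, |u x| ^ twoStar N s) = δ ∧
      levyQ N s u r = δ ∧
      Metric.infDist zmax Ω ≤ r :=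
  statement10_general N s hN hsN Ω hΩb u hLp hvan δ hδ0 hδ
end
end

section
/- Let N = 4n + m with n ≥ 1 an integer and m ∈ {0,1,2,3}. Then for each j = 1, …, n there exist a closed subgroup G_j of O(N) and a continuous surjective group homomorphism σ_j : G_j → {1,−1} such that: (a) G_j and σ_j satisfy conditions (G1) and (G2); and (b) whenever 1 ≤ i ≠ j ≤ n, if u : ℝ^N → ℝ is σ_i-equivariant (for G_i) and not identically zero, and v : ℝ^N → ℝ is σ_j-equivariant (for G_j) and not identically zero, then u ≠ v. -/
open MeasureTheory Real

noncomputable section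

/-- The orthogonal group `O(N)`. -/
abbrev ONgrp (N : ℕ) := Matrix.orthogonalGroup (Fin N) ℝ

/-- The linear action of `O(N)` on `ℝ^N`. -/
def ogAct {N : ℕ} (g : ONgrp N) (x : Euc N) : Euc N :=
  Matrix.toEuclideanLin (g : Matrix (Fin N) (Fin N) ℝ) x

/-- `σ`-equivariance of `u : ℝ^N → ℝ` under a subgroup `G` of `O(N)`:
`u (g x) = σ(g) u (x)` for all `g ∈ G`, `x ∈ ℝ^N`. -/
def IsEquivariant {N : ℕ} (G : Subgroup (ONgrp N)) (σ : G →* ℤˣ) (u : Euc N → ℝ) : Prop :=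
  ∀ g : G, ∀ x : Euc N, u (ogAct (g : ONgrp N) x) = ((σ g : ℤ) : ℝ) * u x

/-- `G`-invariance of a set. -/
def IsInvariantSet {N : ℕ} (G : Subgroup (ONgrp N)) (Ω : Set (Euc N)) : Prop :=
  ∀ g : G, ∀ x ∈ Ω, ogAct (g : ONgrp N) x ∈ Ω

/-- Condition (G1): every `G`-orbit is infinite or a single point. -/
def CondG1 {N : ℕ} (G : Subgroup (ONgrp N)) : Prop :=
  ∀ x : Euc N, ({y : Euc N | ∃ g : G, ogAct (g : ONgrp N) x = y}).Infinite ∨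
    ∀ g : G, ogAct (g : ONgrp N) x = x

/-- Condition (G2): there is a point `ξ` with `σ = 1` on the stabilizer of `ξ`. -/
def CondG2 {N : ℕ} (G : Subgroup (ONgrp N)) (σ : G →* ℤˣ) : Prop :=
  ∃ ξ : Euc N, ∀ g : G, ogAct (g : ONgrp N) ξ = ξ → σ g = 1


/-!
Instead of the groups `Γ^j × Λ_j` we use one group for all `j`: `K = (S¹ × {±1})ⁿ` acts on
`ℝ^N = (ℝ² ⊕ ℝ²)ⁿ ⊕ ℝ^m`, its `k`-th factor `(z, ε)` acting on the `k`-th copy of `ℝ² ⊕ ℝ²` by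
`R_z ⊕ ε R_z` (`R_z` the rotation by `z`) and trivially on `ℝ^m`; then `G = ρ(K) ≤ O(N)` and
`σ_j(ρ(z, ε)) = ε_j`. As `K` is compact and `ρ` injective, `ρ : K → G` is a homeomorphism, so `G`
is closed and the `σ_j` are continuous.

(G1): the orbit of `x` under the diagonal circle `z ↦ ρ(z, 1)` is connected, so if it is finite it
is a point; taking `z = -1` shows that `x` vanishes on `(ℝ² ⊕ ℝ²)ⁿ`, hence is fixed by `G`.
(G2): if `ρ(z, ε)` fixes `(e₀, e₀)` in the `j`-th copy of `ℝ² ⊕ ℝ²`, then `R_{z_j} e₀ = e₀` and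
`ε_j R_{z_j} e₀ = e₀`, so `ε_j = 1`.
The element with `ε_j = -1` and all other coordinates trivial has `σ_i = 1 ≠ σ_j`, so a function
that is both `σ_i`- and `σ_j`-equivariant vanishes.
-/

open Matrix

section RangeLift

variable {K H M : Type*} [Group K] [Group H] [Monoid M]

def MonoidHom.rangeLift (ρ : K →* H) (hρ : Function.Injective ρ) (χ : K →* M) :
    ρ.range →* M :=
  χ.comp (MonoidHom.ofInjective hρ).symm.toMonoidHom

@[simp]
lemma MonoidHom.rangeLift_ofInjective (ρ : K →* H) (hρ : Function.Injective ρ) (χ : K →* M)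
    (k : K) : ρ.rangeLift hρ χ (MonoidHom.ofInjective hρ k) = χ k := by
  simp [MonoidHom.rangeLift]

variable [TopologicalSpace K] [TopologicalSpace H] [TopologicalSpace M] [CompactSpace K]
  [T2Space H] {ρ : K →* H}

lemma MonoidHom.continuous_rangeLift (hρc : Continuous ρ) (hρ : Function.Injective ρ)
    {χ : K →* M} (hχ : Continuous χ) : Continuous (ρ.rangeLift hρ χ) :=
  have hc : Continuous (MonoidHom.ofInjective hρ).toEquiv := hρc.subtype_mk _
  hχ.comp hc.homeoOfEquivCompactToT2.symm.continuous

lemma MonoidHom.isClosed_range_of_compactSpace (hρc : Continuous ρ) :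
    IsClosed (ρ.range : Set H) := by
  rw [MonoidHom.coe_range]
  exact (isCompact_range hρc).isClosed

end RangeLift

lemma Matrix.reindex_mem_orthogonalGroup {ι κ : Type*} [Fintype ι] [DecidableEq ι] [Fintype κ]
    [DecidableEq κ] (e : ι ≃ κ) {M : Matrix ι ι ℝ} (hM : M ∈ orthogonalGroup ι ℝ) :
    reindex e e M ∈ orthogonalGroup κ ℝ := by
  rw [mem_orthogonalGroup_iff'] at hM ⊢
  rw [transpose_reindex, reindex_apply, reindex_apply, submatrix_mul_equiv, hM,
    submatrix_one_equiv]

lemma continuous_ogAct_left {N : ℕ} (x : Euc N) : Continuous fun g : ONgrp N => ogAct g x := by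
  change Continuous fun g : ONgrp N => WithLp.toLp 2 ((g : Matrix (Fin N) (Fin N) ℝ) *ᵥ x.ofLp)
  exact (PiLp.continuous_toLp 2 _).comp (continuous_subtype_val.matrix_mulVec continuous_const)

lemma IsEquivariant.eq_zero_of_ne {N : ℕ} {G : Subgroup (ONgrp N)} {σ τ : G →* ℤˣ}
    {u : Euc N → ℝ} (hσ : IsEquivariant G σ u) (hτ : IsEquivariant G τ u) {g : G}
    (hg : σ g ≠ τ g) : u = 0 := by
  funext x
  have hne : ((σ g : ℤ) : ℝ) ≠ ((τ g : ℤ) : ℝ) := by exact_mod_cast Units.val_injective.ne hg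
  have h : ((σ g : ℤ) : ℝ) * u x = ((τ g : ℤ) : ℝ) * u x := (hσ g x).symm.trans (hτ g x)
  exact by_contra fun hx => hne (mul_right_cancel₀ hx h)

namespace EquivariantSeparation

def rotationMatrix : Circle →* Matrix (Fin 2) (Fin 2) ℝ :=
  (Algebra.leftMulMatrix Complex.basisOneI : ℂ →* Matrix (Fin 2) (Fin 2) ℝ).comp Circle.coeHom

lemma rotationMatrix_apply (z : Circle) :
    rotationMatrix z = !![(z : ℂ).re, -(z : ℂ).im; (z : ℂ).im, (z : ℂ).re] :=
  Algebra.leftMulMatrix_complex z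

lemma rotationMatrix_transpose (z : Circle) : (rotationMatrix z)ᵀ = rotationMatrix z⁻¹ := by
  rw [rotationMatrix_apply, rotationMatrix_apply, Circle.coe_inv_eq_conj]
  ext i j
  fin_cases i <;> fin_cases j <;> simp

lemma continuous_rotationMatrix : Continuous rotationMatrix :=
  (Algebra.leftMulMatrix Complex.basisOneI).toLinearMap.continuous_of_finiteDimensional.comp
    continuous_subtype_val

lemma rotationMatrix_neg_one : rotationMatrix (-1) = -1 := by
  rw [rotationMatrix_apply]
  ext i j
  fin_cases i <;> fin_cases j <;> simp

lemma rotationMatrix_eq_one_iff (z : Circle) : rotationMatrix z = 1 ↔ z = 1 := by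
  refine ⟨fun h => ?_, fun h => h ▸ map_one _⟩
  rw [rotationMatrix_apply] at h
  have h00 := congrFun (congrFun h 0) 0
  have h10 := congrFun (congrFun h 1) 0
  simp at h00 h10
  exact Circle.ext (Complex.ext h00 h10)

def unitCast : ℤˣ →* ℝ := (Int.castRingHom ℝ : ℤ →* ℝ).comp (Units.coeHom ℤ)

lemma unitCast_injective : Function.Injective unitCast :=
  fun _ _ h => Units.val_injective (Int.cast_injective h)

lemma continuous_unitCast : Continuous unitCast := continuous_of_discreteTopology

def twistedBlock : Circle × ℤˣ →* Matrix (Fin 2 ⊕ Fin 2) (Fin 2 ⊕ Fin 2) ℝ where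
  toFun p := fromBlocks (rotationMatrix p.1) 0 0 (unitCast p.2 • rotationMatrix p.1)
  map_one' := by simp
  map_mul' p q := by simp [fromBlocks_multiply, smul_smul, mul_comm]

lemma twistedBlock_transpose (p : Circle × ℤˣ) : (twistedBlock p)ᵀ = twistedBlock p⁻¹ := by
  simp [twistedBlock, fromBlocks_transpose, rotationMatrix_transpose]

lemma continuous_twistedBlock : Continuous twistedBlock :=
  (continuous_rotationMatrix.comp continuous_fst).matrix_fromBlocks continuous_const
    continuous_const
    ((continuous_unitCast.comp continuous_snd).smul (continuous_rotationMatrix.comp continuous_fst))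

lemma twistedBlock_eq_one_iff (p : Circle × ℤˣ) : twistedBlock p = 1 ↔ p = 1 := by
  refine ⟨fun h => ?_, fun h => h ▸ map_one _⟩
  simp only [twistedBlock, MonoidHom.coe_mk, OneHom.coe_mk, ← fromBlocks_one,
    fromBlocks_inj] at h
  obtain ⟨hrot, -, -, hsign⟩ := h
  have hz := (rotationMatrix_eq_one_iff _).1 hrot
  rw [hz, map_one] at hsign
  have hε : unitCast p.2 = unitCast 1 := by simpa using congrFun (congrFun hsign 0) 0
  exact Prod.ext hz (unitCast_injective hε)

lemma twistedBlock_neg_one : twistedBlock (-1, 1) = -1 := by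
  ext (i | i) (j | j) <;> simp [twistedBlock, rotationMatrix_neg_one, one_apply]

/-- Coordinates of `ℝ^{4n+m} = (ℝ² ⊕ ℝ²)ⁿ ⊕ ℝ^m`. -/
abbrev SplitIndex (n m : ℕ) := ((Fin 2 ⊕ Fin 2) × Fin n) ⊕ Fin m

def blockRep (n m : ℕ) :
    (Fin n → Circle × ℤˣ) →* Matrix (SplitIndex n m) (SplitIndex n m) ℝ where
  toFun A := fromBlocks (blockDiagonal fun k => twistedBlock (A k)) 0 0 1
  map_one' := by
    simp [show (fun _ : Fin n => (1 : Matrix (Fin 2 ⊕ Fin 2) (Fin 2 ⊕ Fin 2) ℝ)) = 1 from rfl]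
  map_mul' A B := by simp [fromBlocks_multiply, ← blockDiagonal_mul]

variable {n m N : ℕ}

lemma blockRep_transpose (A : Fin n → Circle × ℤˣ) :
    (blockRep n m A)ᵀ = blockRep n m A⁻¹ := by
  simp [blockRep, fromBlocks_transpose, blockDiagonal_transpose, twistedBlock_transpose]

lemma blockRep_mem_orthogonalGroup (A : Fin n → Circle × ℤˣ) :
    blockRep n m A ∈ orthogonalGroup (SplitIndex n m) ℝ := by
  rw [mem_orthogonalGroup_iff', blockRep_transpose, ← map_mul, inv_mul_cancel, map_one]

lemma blockRep_injective : Function.Injective (blockRep n m) := by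
  rw [injective_iff_map_eq_one]
  intro A hA
  simp only [blockRep, MonoidHom.coe_mk, OneHom.coe_mk, ← fromBlocks_one, fromBlocks_inj] at hA
  funext k
  exact (twistedBlock_eq_one_iff _).1
    (congrFun (blockDiagonal_injective (hA.1.trans blockDiagonal_one.symm)) k)

lemma continuous_blockRep : Continuous (blockRep n m) := by
  have : Continuous fun A : Fin n → Circle × ℤˣ => fun k => twistedBlock (A k) :=
    continuous_pi fun k => continuous_twistedBlock.comp (continuous_apply k)
  exact this.matrix_blockDiagonal.matrix_fromBlocks continuous_const continuous_const
    continuous_const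

lemma blockRep_neg_one : blockRep n m (fun _ => (-1, 1)) = fromBlocks (-1) 0 0 1 := by
  have : (fun _ : Fin n => (-1 : Matrix (Fin 2 ⊕ Fin 2) (Fin 2 ⊕ Fin 2) ℝ)) = -1 := rfl
  simp only [blockRep, MonoidHom.coe_mk, OneHom.coe_mk, twistedBlock_neg_one, this,
    blockDiagonal_neg, blockDiagonal_one]

lemma blockRep_mulVec_inl (A : Fin n → Circle × ℤˣ) (u : SplitIndex n m → ℝ)
    (q : (Fin 2 ⊕ Fin 2) × Fin n) :
    (blockRep n m A *ᵥ u) (Sum.inl q) =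
      (blockDiagonal (fun k => twistedBlock (A k)) *ᵥ (u ∘ Sum.inl)) q := by
  rw [← Sum.elim_comp_inl_inr u]
  simp [blockRep, fromBlocks_mulVec]

lemma blockRep_mulVec_inr (A : Fin n → Circle × ℤˣ) (u : SplitIndex n m → ℝ) (t : Fin m) :
    (blockRep n m A *ᵥ u) (Sum.inr t) = u (Sum.inr t) := by
  rw [← Sum.elim_comp_inl_inr u]
  simp [blockRep, fromBlocks_mulVec]

def orthRep (e : SplitIndex n m ≃ Fin N) : (Fin n → Circle × ℤˣ) →* ONgrp N :=
  ((reindexAlgEquiv ℝ ℝ e : Matrix _ _ ℝ →* Matrix _ _ ℝ).comp (blockRep n m)).codRestrict _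
    fun A => reindex_mem_orthogonalGroup e (blockRep_mem_orthogonalGroup A)

lemma continuous_orthRep (e : SplitIndex n m ≃ Fin N) : Continuous (orthRep e) :=
  (continuous_blockRep.matrix_reindex e e).subtype_mk _

lemma orthRep_injective (e : SplitIndex n m ≃ Fin N) : Function.Injective (orthRep e) :=
  fun _ _ h => blockRep_injective ((reindex e e).injective (congrArg Subtype.val h))

lemma ogAct_orthRep_apply (e : SplitIndex n m ≃ Fin N) (A : Fin n → Circle × ℤˣ) (x : Euc N)
    (i : SplitIndex n m) :
    ogAct (orthRep e A) x (e i) = (blockRep n m A *ᵥ fun j => x (e j)) i := by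
  change (reindex e e (blockRep n m A) *ᵥ x.ofLp) (e i) = _
  rw [reindex_apply, submatrix_mulVec_equiv]
  simp [Function.comp_def]

lemma ogAct_orthRep_eq_self_of_inl_eq_zero (e : SplitIndex n m ≃ Fin N)
    (A : Fin n → Circle × ℤˣ) {x : Euc N} (hx : ∀ q, x (e (Sum.inl q)) = 0) :
    ogAct (orthRep e A) x = x := by
  ext j
  obtain ⟨i, rfl⟩ := e.surjective j
  rw [ogAct_orthRep_apply]
  rcases i with q | t
  · rw [blockRep_mulVec_inl, hx, show (fun j => x (e j)) ∘ Sum.inl = 0 from funext hx,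
      mulVec_zero, Pi.zero_apply]
  · rw [blockRep_mulVec_inr]

lemma inl_eq_zero_of_finite_orbit (e : SplitIndex n m ≃ Fin N) {x : Euc N}
    (hfin : {y : Euc N | ∃ g : (orthRep e).range, ogAct (g : ONgrp N) x = y}.Finite)
    (q : (Fin 2 ⊕ Fin 2) × Fin n) : x (e (Sum.inl q)) = 0 := by
  set f : Circle → Euc N := fun z => ogAct (orthRep e fun _ => (z, 1)) x
  have hsub : Set.range f ⊆ {y : Euc N | ∃ g : (orthRep e).range, ogAct (g : ONgrp N) x = y} := by
    rintro _ ⟨z, rfl⟩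
    exact ⟨⟨_, _, rfl⟩, rfl⟩
  have hconn : IsPreconnected (Set.range f) :=
    isPreconnected_range ((continuous_ogAct_left x).comp
      ((continuous_orthRep e).comp (continuous_pi fun _ => continuous_id.prodMk continuous_const)))
  have hsubs : (Set.range f).Subsingleton :=
    Set.not_nontrivial_iff.1 fun h => hconn.infinite_of_nontrivial h (hfin.subset hsub)
  have hf := congrFun (congrArg WithLp.ofLp (hsubs ⟨-1, rfl⟩ ⟨1, rfl⟩)) (e (Sum.inl q))
  simp only [f, ogAct_orthRep_apply, blockRep_neg_one] at hf
  rw [show (fun _ : Fin n => ((1 : Circle), (1 : ℤˣ))) = 1 from rfl, map_one, one_mulVec,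
    ← Sum.elim_comp_inl_inr fun j => x (e j), fromBlocks_mulVec] at hf
  simp only [neg_mulVec, one_mulVec, zero_mulVec, add_zero, Pi.neg_apply, Sum.elim_inl,
    Function.comp_apply] at hf
  linarith

lemma condG1_range_orthRep (e : SplitIndex n m ≃ Fin N) : CondG1 (orthRep e).range := by
  intro x
  refine (Set.finite_or_infinite _).symm.imp_right fun hfin => ?_
  rintro ⟨_, A, rfl⟩
  exact ogAct_orthRep_eq_self_of_inl_eq_zero e A (inl_eq_zero_of_finite_orbit e hfin)

def anchor (e : SplitIndex n m ≃ Fin N) (j : Fin n) : Euc N :=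
  EuclideanSpace.single (e (Sum.inl (Sum.inl 0, j))) 1 +
    EuclideanSpace.single (e (Sum.inl (Sum.inr 0, j))) 1

lemma sign_eq_one_of_fixes_anchor (e : SplitIndex n m ≃ Fin N) (A : Fin n → Circle × ℤˣ)
    (j : Fin n) (h : ogAct (orthRep e A) (anchor e j) = anchor e j) : (A j).2 = 1 := by
  have h₁ := congrFun (congrArg WithLp.ofLp h) (e (Sum.inl (Sum.inl 0, j)))
  have h₂ := congrFun (congrArg WithLp.ofLp h) (e (Sum.inl (Sum.inr 0, j)))
  have hu : (fun i => anchor e j (e i)) ∘ Sum.inl =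
      Pi.single (Sum.inl 0, j) 1 + Pi.single (Sum.inr 0, j) 1 := by
    ext q
    simp [anchor, Pi.single_apply]
  rw [ogAct_orthRep_apply, blockRep_mulVec_inl, hu] at h₁ h₂
  simp [anchor, mulVec_add, mulVec_single, blockDiagonal_apply, twistedBlock] at h₁ h₂
  rw [h₁, mul_one, ← map_one unitCast] at h₂
  exact unitCast_injective h₂

def signAt (j : Fin n) : (Fin n → Circle × ℤˣ) →* ℤˣ :=
  (MonoidHom.snd Circle ℤˣ).comp (Pi.evalMonoidHom _ j)

def reflectAt (j : Fin n) : Fin n → Circle × ℤˣ := Pi.mulSingle j (1, -1)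

lemma signAt_reflectAt (i j : Fin n) : signAt i (reflectAt j) = if i = j then -1 else 1 := by
  rcases eq_or_ne i j with rfl | hij
  · simp [signAt, reflectAt]
  · simp [signAt, reflectAt, hij]

def orthSign (e : SplitIndex n m ≃ Fin N) (j : Fin n) : (orthRep e).range →* ℤˣ :=
  (orthRep e).rangeLift (orthRep_injective e) (signAt j)

lemma orthSign_reflectAt (e : SplitIndex n m ≃ Fin N) (i j : Fin n) :
    orthSign e i (MonoidHom.ofInjective (orthRep_injective e) (reflectAt j)) =
      if i = j then -1 else 1 := by
  rw [orthSign, MonoidHom.rangeLift_ofInjective, signAt_reflectAt]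

lemma continuous_orthSign (e : SplitIndex n m ≃ Fin N) (j : Fin n) :
    Continuous (orthSign e j) :=
  MonoidHom.continuous_rangeLift (continuous_orthRep e) _
    (continuous_snd.comp (continuous_apply j))

lemma orthSign_surjective (e : SplitIndex n m ≃ Fin N) (j : Fin n) :
    Function.Surjective (orthSign e j) := by
  intro u
  rcases Int.units_eq_one_or u with rfl | rfl
  · exact ⟨1, map_one _⟩
  · exact ⟨_, by rw [orthSign_reflectAt, if_pos rfl]⟩

lemma condG2_orthSign (e : SplitIndex n m ≃ Fin N) (j : Fin n) :
    CondG2 (orthRep e).range (orthSign e j) := by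
  refine ⟨anchor e j, fun g hg => ?_⟩
  obtain ⟨A, rfl⟩ := (MonoidHom.ofInjective (orthRep_injective e)).surjective g
  rw [orthSign, MonoidHom.rangeLift_ofInjective]
  exact sign_eq_one_of_fixes_anchor e A j hg

end EquivariantSeparation

open EquivariantSeparation

theorem statement19_general (n m N : ℕ) (hNnm : N = 4 * n + m) :
    ∃ (G : Fin n → Subgroup (ONgrp N)) (σ : (j : Fin n) → (G j →* ℤˣ)),
      (∀ j : Fin n, IsClosed ((G j : Set (ONgrp N))) ∧ Continuous (σ j) ∧
        Function.Surjective (σ j) ∧ CondG1 (G j) ∧ CondG2 (G j) (σ j)) ∧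
      (∀ i j : Fin n, i ≠ j → ∀ u v : Euc N → ℝ,
        IsEquivariant (G i) (σ i) u → u ≠ 0 →
        IsEquivariant (G j) (σ j) v → v ≠ 0 → u ≠ v) := by
  have e : SplitIndex n m ≃ Fin N := Fintype.equivFinOfCardEq (by simp [hNnm])
  refine ⟨fun _ => (orthRep e).range, orthSign e, fun j =>
    ⟨(orthRep e).isClosed_range_of_compactSpace (continuous_orthRep e),
      continuous_orthSign e j, orthSign_surjective e j, condG1_range_orthRep e,
      condG2_orthSign e j⟩, ?_⟩
  rintro i j hij u v hu hu0 hv - rfl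
  refine hu0 (hu.eq_zero_of_ne hv
    (g := MonoidHom.ofInjective (orthRep_injective e) (reflectAt j)) ?_)
  rw [orthSign_reflectAt, orthSign_reflectAt, if_neg hij, if_pos rfl]
  decide

/-- for `N = 4n + m` there exist `n` closed subgroups `G_j` of `O(N)` with
continuous surjective homomorphisms `σ_j : G_j → ℤˣ` satisfying (G1) and (G2), such that
nontrivial `σ_i`- and `σ_j`-equivariant functions are distinct for `i ≠ j`. -/
theorem statement19 (n m N : ℕ) (hn : 1 ≤ n) (hm : m ≤ 3) (hNnm : N = 4 * n + m) :
    ∃ (G : Fin n → Subgroup (ONgrp N)) (σ : (j : Fin n) → (G j →* ℤˣ)),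
      (∀ j : Fin n, IsClosed ((G j : Set (ONgrp N))) ∧ Continuous (σ j) ∧
        Function.Surjective (σ j) ∧ CondG1 (G j) ∧ CondG2 (G j) (σ j)) ∧
      (∀ i j : Fin n, i ≠ j → ∀ u v : Euc N → ℝ,
        IsEquivariant (G i) (σ i) u → u ≠ 0 →
        IsEquivariant (G j) (σ j) v → v ≠ 0 → u ≠ v) :=
  statement19_general n m N hNnm

end
end
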